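/- Let n be a positive integer and let H be a finite group having property T(n,SK). Then the number of group homomorphisms from G_n(SK) to H equals the sum, over all group homomorphisms ρ: G_1(SK) → H, of the number of elements g ∈ H with g^n = ρ(D). -/

import Mathlib

/-- Relators of G₁(SK) = ⟨B, D, E | B D B = D B D, E D E = D E D⟩, with B, D, E = 0, 1, 2. -/
def G1SKRels : Set (FreeGroup (Fin 3)) :=
  let B : FreeGroup (Fin 3) := FreeGroup.of 0
  let D : FreeGroup (Fin 3) := FreeGroup.of 1
  let E : FreeGroup (Fin 3) := FreeGroup.of 2
  {B * D * B * (D * B * D)⁻¹,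
   E * D * E * (D * E * D)⁻¹}

/-- The knot group of the square knot. -/
abbrev G1SK := PresentedGroup G1SKRels

/-- Relators of the n-th generalized knot group of the square knot:
⟨b, d, e | b dⁿ bⁿ = dⁿ bⁿ d, e dⁿ eⁿ = dⁿ eⁿ d, eⁿ dⁿ e d⁻ⁿ e⁻ⁿ = bⁿ dⁿ b d⁻ⁿ b⁻ⁿ⟩,
with b, d, e = 0, 1, 2. -/
def GnSKRels (n : ℕ) : Set (FreeGroup (Fin 3)) :=
  let b : FreeGroup (Fin 3) := FreeGroup.of 0
  let d : FreeGroup (Fin 3) := FreeGroup.of 1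
  let e : FreeGroup (Fin 3) := FreeGroup.of 2
  {b * d ^ n * b ^ n * (d ^ n * b ^ n * d)⁻¹,
   e * d ^ n * e ^ n * (d ^ n * e ^ n * d)⁻¹,
   e ^ n * d ^ n * e * (d ^ n)⁻¹ * (e ^ n)⁻¹ * (b ^ n * d ^ n * b * (d ^ n)⁻¹ * (b ^ n)⁻¹)⁻¹}

/-- The n-th generalized knot group of the square knot. -/
abbrev GnSK (n : ℕ) := PresentedGroup (GnSKRels n)

/-- A group `H` has property T(n,SK) if for every homomorphism ρ : G₁(SK) → H and every
g ∈ H with gⁿ = ρ(D), one has (ρ(E)ρ(D))³ g (ρ(E)ρ(D))⁻³ = (ρ(B)ρ(D))³ g (ρ(B)ρ(D))⁻³. -/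
def PropertyTSK (n : ℕ) (H : Type*) [Group H] : Prop :=
  ∀ (ρ : G1SK →* H) (g : H), g ^ n = ρ (PresentedGroup.of 1) →
    (ρ (PresentedGroup.of 2) * ρ (PresentedGroup.of 1)) ^ 3 * g *
      ((ρ (PresentedGroup.of 2) * ρ (PresentedGroup.of 1)) ^ 3)⁻¹ =
    (ρ (PresentedGroup.of 0) * ρ (PresentedGroup.of 1)) ^ 3 * g *
      ((ρ (PresentedGroup.of 0) * ρ (PresentedGroup.of 1)) ^ 3)⁻¹


section Aux
variable {H : Type*} [Group H]

lemma SK_lift_relator_eq_one {α : Type*} {rels : Set (FreeGroup α)}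
    (ρ : PresentedGroup rels →* H) {r : FreeGroup α} (hr : r ∈ rels) :
    FreeGroup.lift (fun i => ρ (PresentedGroup.of i)) r = 1 := by
  have h1 : FreeGroup.lift (fun i => ρ (PresentedGroup.of i))
      = ρ.comp (PresentedGroup.mk rels) := by
    ext i
    simp [PresentedGroup.of, MonoidHom.comp_apply]
  have h2 : PresentedGroup.mk rels r = 1 :=
    (QuotientGroup.eq_one_iff r).mpr (Subgroup.subset_normalClosure hr)
  rw [h1, MonoidHom.comp_apply, h2, map_one]

-- extraction of the braid relations from a hom on G1SK
lemma SK_g1_braidB (ρ : G1SK →* H) :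
    ρ (PresentedGroup.of 0) * ρ (PresentedGroup.of 1) * ρ (PresentedGroup.of 0)
      = ρ (PresentedGroup.of 1) * ρ (PresentedGroup.of 0) * ρ (PresentedGroup.of 1) := by
  have h := SK_lift_relator_eq_one ρ
    (r := FreeGroup.of 0 * FreeGroup.of 1 * FreeGroup.of 0 *
      (FreeGroup.of 1 * FreeGroup.of 0 * FreeGroup.of 1)⁻¹)
    (by unfold G1SKRels; exact Set.mem_insert _ _)
  simpa only [map_mul, map_inv, FreeGroup.lift_apply_of, mul_inv_eq_one] using h

lemma SK_g1_braidE (ρ : G1SK →* H) :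
    ρ (PresentedGroup.of 2) * ρ (PresentedGroup.of 1) * ρ (PresentedGroup.of 2)
      = ρ (PresentedGroup.of 1) * ρ (PresentedGroup.of 2) * ρ (PresentedGroup.of 1) := by
  have h := SK_lift_relator_eq_one ρ
    (r := FreeGroup.of 2 * FreeGroup.of 1 * FreeGroup.of 2 *
      (FreeGroup.of 1 * FreeGroup.of 2 * FreeGroup.of 1)⁻¹)
    (by unfold G1SKRels; exact Set.mem_insert_of_mem _ rfl)
  simpa only [map_mul, map_inv, FreeGroup.lift_apply_of, mul_inv_eq_one] using h

-- extraction of the relations from a hom on GnSK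
lemma SK_gn_rel1 {n : ℕ} (φ : GnSK n →* H) :
    φ (PresentedGroup.of 0) * φ (PresentedGroup.of 1) ^ n * φ (PresentedGroup.of 0) ^ n
      = φ (PresentedGroup.of 1) ^ n * φ (PresentedGroup.of 0) ^ n * φ (PresentedGroup.of 1) := by
  have h := SK_lift_relator_eq_one φ
    (r := FreeGroup.of 0 * FreeGroup.of 1 ^ n * FreeGroup.of 0 ^ n *
      (FreeGroup.of 1 ^ n * FreeGroup.of 0 ^ n * FreeGroup.of 1)⁻¹)
    (by unfold GnSKRels; exact Set.mem_insert _ _)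
  simpa only [map_mul, map_inv, map_pow, FreeGroup.lift_apply_of, mul_inv_eq_one] using h

lemma SK_gn_rel2 {n : ℕ} (φ : GnSK n →* H) :
    φ (PresentedGroup.of 2) * φ (PresentedGroup.of 1) ^ n * φ (PresentedGroup.of 2) ^ n
      = φ (PresentedGroup.of 1) ^ n * φ (PresentedGroup.of 2) ^ n * φ (PresentedGroup.of 1) := by
  have h := SK_lift_relator_eq_one φ
    (r := FreeGroup.of 2 * FreeGroup.of 1 ^ n * FreeGroup.of 2 ^ n *
      (FreeGroup.of 1 ^ n * FreeGroup.of 2 ^ n * FreeGroup.of 1)⁻¹)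
    (by unfold GnSKRels; exact Set.mem_insert_of_mem _ (Set.mem_insert _ _))
  simpa only [map_mul, map_inv, map_pow, FreeGroup.lift_apply_of, mul_inv_eq_one] using h

lemma SK_gn_rel3 {n : ℕ} (φ : GnSK n →* H) :
    φ (PresentedGroup.of 2) ^ n * φ (PresentedGroup.of 1) ^ n * φ (PresentedGroup.of 2) *
        (φ (PresentedGroup.of 1) ^ n)⁻¹ * (φ (PresentedGroup.of 2) ^ n)⁻¹
      = φ (PresentedGroup.of 0) ^ n * φ (PresentedGroup.of 1) ^ n * φ (PresentedGroup.of 0) *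
        (φ (PresentedGroup.of 1) ^ n)⁻¹ * (φ (PresentedGroup.of 0) ^ n)⁻¹ := by
  have h := SK_lift_relator_eq_one φ
    (r := FreeGroup.of 2 ^ n * FreeGroup.of 1 ^ n * FreeGroup.of 2 * (FreeGroup.of 1 ^ n)⁻¹ *
      (FreeGroup.of 2 ^ n)⁻¹ *
      (FreeGroup.of 0 ^ n * FreeGroup.of 1 ^ n * FreeGroup.of 0 * (FreeGroup.of 1 ^ n)⁻¹ *
        (FreeGroup.of 0 ^ n)⁻¹)⁻¹)
    (by unfold GnSKRels; exact Set.mem_insert_of_mem _ (Set.mem_insert_of_mem _ rfl))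
  simpa only [map_mul, map_inv, map_pow, FreeGroup.lift_apply_of, mul_inv_eq_one] using h

end Aux

section Constr
variable {H : Type*} [Group H]

lemma SK_pow_rel {n : ℕ} {b d : H} (h : b * d ^ n * b ^ n = d ^ n * b ^ n * d) :
    b ^ n * d ^ n * b ^ n = d ^ n * b ^ n * d ^ n := by
  have hs : SemiconjBy (d ^ n * b ^ n) d b := by
    rw [mul_assoc] at h
    exact h.symm
  have hp := hs.pow_right n
  rw [mul_assoc]
  exact hp.symm

lemma SK_braid_conj {x d : H} (h : x * d * x = d * x * d) :
    d * x * d * (d * x)⁻¹ = x := by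
  calc d * x * d * (d * x)⁻¹ = (x * d * x) * x⁻¹ * d⁻¹ := by rw [h]; group
    _ = x := by group

lemma SK_braid_cube {x d : H} (h : x * d * x = d * x * d) :
    (x * d) ^ 3 = x * d ^ 2 * x * d ^ 2 := by
  rw [pow_succ, pow_succ, pow_one, pow_two]
  calc (x * d) * (x * d) * (x * d) = x * d * (x * d * x) * d := by group
    _ = x * d * (d * x * d) * d := by rw [h]
    _ = x * (d * d) * x * (d * d) := by group

lemma SK_bn_eq {n : ℕ} {B D g : H} (hB : B * D * B = D * B * D) (hg : g ^ n = D) :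
    (D * B * g * (D * B)⁻¹) ^ n = B := by
  rw [conj_pow, hg]
  exact SK_braid_conj hB

lemma SK_conj3 {D E g : H} (hE : E * D * E = D * E * D) (hDDg : D * D * g = g * (D * D)) :
    E * D * (D * E * g * (D * E)⁻¹) * D⁻¹ * E⁻¹ = (E * D) ^ 3 * g * ((E * D) ^ 3)⁻¹ := by
  have hg' : D * D * g * (D * D)⁻¹ = g := by rw [hDDg]; group
  rw [SK_braid_cube hE, pow_two]
  calc E * D * (D * E * g * (D * E)⁻¹) * D⁻¹ * E⁻¹
      = E * (D * D) * E * g * (E * (D * D) * E)⁻¹ := by group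
    _ = E * (D * D) * E * (D * D * g * (D * D)⁻¹) * (E * (D * D) * E)⁻¹ := by rw [hg']
    _ = E * (D * D) * E * (D * D) * g * (E * (D * D) * E * (D * D))⁻¹ := by group

noncomputable def SKtoG1 {n : ℕ} (φ : GnSK n →* H) : G1SK →* H :=
  PresentedGroup.toGroup (f := fun i => (φ (PresentedGroup.of i)) ^ n) (by
    intro r hr
    unfold G1SKRels at hr
    simp only [Set.mem_insert_iff, Set.mem_singleton_iff] at hr
    rcases hr with rfl | rfl
    · simp only [map_mul, map_inv, FreeGroup.lift_apply_of, mul_inv_eq_one]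
      exact SK_pow_rel (SK_gn_rel1 φ)
    · simp only [map_mul, map_inv, FreeGroup.lift_apply_of, mul_inv_eq_one]
      exact SK_pow_rel (SK_gn_rel2 φ))

@[simp] lemma SKtoG1_of {n : ℕ} (φ : GnSK n →* H) (i : Fin 3) :
    SKtoG1 φ (PresentedGroup.of i) = (φ (PresentedGroup.of i)) ^ n :=
  PresentedGroup.toGroup.of _

noncomputable def SKofPair {n : ℕ} (hT : PropertyTSK n H) (ρ : G1SK →* H) (g : H)
    (hg : g ^ n = ρ (PresentedGroup.of 1)) : GnSK n →* H :=
  PresentedGroup.toGroup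
    (f := fun i => ![ρ (PresentedGroup.of 1) * ρ (PresentedGroup.of 0) * g *
                       (ρ (PresentedGroup.of 1) * ρ (PresentedGroup.of 0))⁻¹,
                     g,
                     ρ (PresentedGroup.of 1) * ρ (PresentedGroup.of 2) * g *
                       (ρ (PresentedGroup.of 1) * ρ (PresentedGroup.of 2))⁻¹] i)
    (by
    set B := ρ (PresentedGroup.of 0) with hBdef
    set D := ρ (PresentedGroup.of 1) with hDdef
    set E := ρ (PresentedGroup.of 2) with hEdef
    have hB : B * D * B = D * B * D := SK_g1_braidB ρ
    have hE : E * D * E = D * E * D := SK_g1_braidE ρ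
    have hbn : (D * B * g * (D * B)⁻¹) ^ n = B := SK_bn_eq hB hg
    have hen : (D * E * g * (D * E)⁻¹) ^ n = E := SK_bn_eq hE hg
    have hDDg : D * D * g = g * (D * D) := by
      have h1 : g * g ^ n = g ^ n * g := ((Commute.refl g).pow_right n).eq
      rw [hg] at h1
      rw [mul_assoc, ← h1, ← mul_assoc, ← h1, mul_assoc]
    have hT3 := hT ρ g hg
    intro r hr
    unfold GnSKRels at hr
    simp only [Set.mem_insert_iff, Set.mem_singleton_iff] at hr
    rcases hr with rfl | rfl | rfl
    · simp only [map_mul, map_inv, map_pow, FreeGroup.lift_apply_of, mul_inv_eq_one,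
        Matrix.cons_val_zero, Matrix.cons_val_one, Matrix.head_cons, Matrix.cons_val_two, Matrix.tail_cons]
      rw [hbn, hg]
      group
    · simp only [map_mul, map_inv, map_pow, FreeGroup.lift_apply_of, mul_inv_eq_one,
        Matrix.cons_val_zero, Matrix.cons_val_one, Matrix.head_cons, Matrix.cons_val_two, Matrix.tail_cons]
      rw [hen, hg]
      group
    · simp only [map_mul, map_inv, map_pow, FreeGroup.lift_apply_of, mul_inv_eq_one,
        Matrix.cons_val_zero, Matrix.cons_val_one, Matrix.head_cons, Matrix.cons_val_two, Matrix.tail_cons]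
      rw [hbn, hen, hg]
      calc E * D * (D * E * g * (D * E)⁻¹) * D⁻¹ * E⁻¹
          = (E * D) ^ 3 * g * ((E * D) ^ 3)⁻¹ := SK_conj3 hE hDDg
        _ = (B * D) ^ 3 * g * ((B * D) ^ 3)⁻¹ := hT3
        _ = B * D * (D * B * g * (D * B)⁻¹) * D⁻¹ * B⁻¹ := (SK_conj3 hB hDDg).symm)

@[simp] lemma SKofPair_of {n : ℕ} (hT : PropertyTSK n H) (ρ : G1SK →* H) (g : H)
    (hg : g ^ n = ρ (PresentedGroup.of 1)) (i : Fin 3) :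
    SKofPair hT ρ g hg (PresentedGroup.of i) =
      ![ρ (PresentedGroup.of 1) * ρ (PresentedGroup.of 0) * g *
          (ρ (PresentedGroup.of 1) * ρ (PresentedGroup.of 0))⁻¹,
        g,
        ρ (PresentedGroup.of 1) * ρ (PresentedGroup.of 2) * g *
          (ρ (PresentedGroup.of 1) * ρ (PresentedGroup.of 2))⁻¹] i :=
  PresentedGroup.toGroup.of _

end Constr

section Main
variable {H : Type*} [Group H]

noncomputable def SKequiv {n : ℕ} (hT : PropertyTSK n H) :
    (GnSK n →* H) ≃ (Σ ρ : G1SK →* H, {g : H // g ^ n = ρ (PresentedGroup.of 1)}) where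
  toFun φ := ⟨SKtoG1 φ, φ (PresentedGroup.of 1), by simp⟩
  invFun x := SKofPair hT x.1 x.2.1 x.2.2
  left_inv φ := by
    ext i
    fin_cases i
    · simp only [Fin.zero_eta, Fin.mk_one, Fin.reduceFinMk, SKofPair_of, SKtoG1_of, Matrix.cons_val_zero]
      rw [← SK_gn_rel1 φ]
      group
    · simp only [Fin.zero_eta, Fin.mk_one, Fin.reduceFinMk, SKofPair_of, SKtoG1_of, Matrix.cons_val_one, Matrix.head_cons, Matrix.cons_val_zero]
    · simp only [Fin.zero_eta, Fin.mk_one, Fin.reduceFinMk, SKofPair_of, SKtoG1_of, Matrix.cons_val_two, Matrix.tail_cons,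
        Matrix.head_cons]
      rw [← SK_gn_rel2 φ]
      group
  right_inv x := by
    obtain ⟨ρ, g, hg⟩ := x
    refine Sigma.subtype_ext ?_ ?_
    · ext i
      fin_cases i
      · simp only [Fin.zero_eta, Fin.mk_one, Fin.reduceFinMk, SKtoG1_of, SKofPair_of, Matrix.cons_val_zero]
        exact SK_bn_eq (SK_g1_braidB ρ) hg
      · simp only [Fin.zero_eta, Fin.mk_one, Fin.reduceFinMk, SKtoG1_of, SKofPair_of, Matrix.cons_val_one, Matrix.head_cons]
        exact hg
      · simp only [Fin.zero_eta, Fin.mk_one, Fin.reduceFinMk, SKtoG1_of, SKofPair_of, Matrix.cons_val_two, Matrix.tail_cons,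
          Matrix.head_cons]
        exact SK_bn_eq (SK_g1_braidE ρ) hg
    · simp only [SKofPair_of, Matrix.cons_val_one, Matrix.head_cons, Matrix.cons_val_zero]

end Main


theorem stmt_11 (n : ℕ) (hn : 0 < n) (H : Type*) [Group H] [Finite H]
    (hT : PropertyTSK n H) :
    Nat.card (GnSK n →* H) =
      ∑ᶠ ρ : G1SK →* H, Nat.card {g : H // g ^ n = ρ (PresentedGroup.of 1)} := by

  classical
  have hF1 : Finite (G1SK →* H) := by
    apply Finite.of_injective (fun ρ => fun i : Fin 3 => ρ (PresentedGroup.of i))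
    intro ρ1 ρ2 h
    ext i
    exact congrFun h i
  have := Fintype.ofFinite H
  have := Fintype.ofFinite (G1SK →* H)
  rw [Nat.card_congr (SKequiv hT), Nat.card_eq_fintype_card, Fintype.card_sigma,
    finsum_eq_sum_of_fintype]
  simp [Nat.card_eq_fintype_card]
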